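/- arXiv:1303.1790 — 6 statements merged into one kernel-verified Lean document; each statement's English description precedes it below -/
import Mathlib

section
/- Let m ≥ 1, m₀ > 0, J₀ ∈ ℝ^{3×3}, and let M, J, N, L₁^M, R₁^M, L₁^J, R₁^J ∈ ℝ^{3×3}, C^M, C^J, W₁^M, W₁^J ∈ ℝ^{3×m} satisfy: M, J, L₁^M and R₁^J are diagonal; N, R₁^M and L₁^J have nonzero entries at most in positions (2,3) and (3,2); the first columns satisfy C^M e₁ = (C^M)₁₁ e₁, C^J e₁ = 0, W₁^M e₁ = (W₁^M)₁₁ e₁, W₁^J e₁ = 0. Assume the 6×6 matrix 𝒥 = [[m₀ Id + M, N], [Nᵀ, J₀ + J]] is invertible and m₀ + M₁₁ ≠ 0. Set α = −(C^M)₁₁/(m₀+M₁₁), β = −(L₁^M)₁₁/(m₀+M₁₁), γ = −(W₁^M)₁₁/(m₀+M₁₁). Let h₁, l₁, w₁ ∈ C¹([0,T]; ℝ) satisfy h₁' = l₁ and l₁' = α w₁' + β l₁ w₁ + γ w₁². Then, setting h = (h₁,0,0), q⃗ = (0,0,0), l = (l₁,0,0), r = (0,0,0) and w = (w₁,0,…,0)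 ∈ ℝ^m, the tuple (h, q⃗, l, r, w) solves the system: h' = (1−‖q⃗‖²) l + 2√(1−‖q⃗‖²) q⃗ × l + (l·q⃗) q⃗ − q⃗ × l × q⃗, q⃗' = ½(√(1−‖q⃗‖²) r + q⃗ × r), (l, r)' = 𝒥⁻¹ (C w' + F(l,r,w)). -/
/-!
With `q⃗ = 0` and `r = 0` the kinematic equations reduce to `h' = l` and `q⃗' = 0`. For a pure
surge motion `l = l₁ e₁`, `w = w₁ e₁`, the sparsity assumptions make every term of
`C w' + F(l, 0, w)` a multiple of `(e₁; 0)`: the gyroscopic term is `S(l) (λ e₁) = λ l × e₁ = 0`,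
and the remaining terms only see first columns. Since also `𝒥 (e₁; 0) = (m₀ + M₁₁) (e₁; 0)`,
the equation for `(l, r)` collapses to the scalar equation
`(m₀ + M₁₁) l₁' = -C^M₁₁ w₁' - L^M₁₁ l₁ w₁ - W^M₁₁ w₁²`, which is `l₁' = α w₁' + β l₁ w₁ + γ w₁²`.
-/

noncomputable section

open Matrix

/-- The skew-symmetric matrix `S(y)` with `S(y) x = y × x`. -/
def Smat (y : Fin 3 → ℝ) : Matrix (Fin 3) (Fin 3) ℝ :=
  !![0, -y 2, y 1; y 2, 0, -y 0; -y 1, y 0, 0]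

/-- The virtual inertia matrix `𝒥 = [[m₀ Id + M, N], [Nᵀ, J₀ + J]]`. -/
def Jcal (m₀ : ℝ) (J₀ M J N : Matrix (Fin 3) (Fin 3) ℝ) :
    Matrix (Fin 3 ⊕ Fin 3) (Fin 3 ⊕ Fin 3) ℝ :=
  Matrix.fromBlocks (m₀ • (1 : Matrix (Fin 3) (Fin 3) ℝ) + M) N Nᵀ (J₀ + J)

/-- Vertical stacking of two `3 × m` matrices into a `6 × m` matrix. -/
def stackM {m : ℕ} (A B : Matrix (Fin 3) (Fin m) ℝ) :
    Matrix (Fin 3 ⊕ Fin 3) (Fin m) ℝ :=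
  Matrix.of fun i j => Sum.elim (fun a => A a j) (fun a => B a j) i

/-- The control matrix `C = −[Cᴹ; Cᴶ]`. -/
def Cmat {m : ℕ} (CM CJ : Matrix (Fin 3) (Fin m) ℝ) :
    Matrix (Fin 3 ⊕ Fin 3) (Fin m) ℝ := -(stackM CM CJ)

/-- The quadratic map
`F(l,r,w) = −[[S(r),0],[S(l),S(r)]] (𝒥 (l;r) − C w)
  − Σ_p w_p (Lᴹ_p l + Rᴹ_p r + Wᴹ_p w ; Lᴶ_p l + Rᴶ_p r + Wᴶ_p w)`. -/
def Fquad {m : ℕ} (m₀ : ℝ) (J₀ M J N : Matrix (Fin 3) (Fin 3) ℝ)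
    (CM CJ : Matrix (Fin 3) (Fin m) ℝ)
    (LM RM LJ RJ : Fin m → Matrix (Fin 3) (Fin 3) ℝ)
    (WM WJ : Fin m → Matrix (Fin 3) (Fin m) ℝ)
    (l r : Fin 3 → ℝ) (w : Fin m → ℝ) : Fin 3 ⊕ Fin 3 → ℝ :=
  -((Matrix.fromBlocks (Smat r) 0 (Smat l) (Smat r)).mulVec
      ((Jcal m₀ J₀ M J N).mulVec (Sum.elim l r) - (Cmat CM CJ).mulVec w))
  - ∑ p : Fin m, w p • Sum.elim
      ((LM p).mulVec l + (RM p).mulVec r + (WM p).mulVec w)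
      ((LJ p).mulVec l + (RJ p).mulVec r + (WJ p).mulVec w)

/-- Right-hand side of the equation for `h`:
`(1−‖q‖²) l + 2√(1−‖q‖²) q × l + (l·q) q − q × (l × q)`. -/
def rhsH (q l : Fin 3 → ℝ) : Fin 3 → ℝ :=
  (1 - ∑ i, q i ^ 2) • l
    + (2 * Real.sqrt (1 - ∑ i, q i ^ 2)) • crossProduct q l
    + (∑ i, l i * q i) • q
    - crossProduct q (crossProduct l q)

/-- Right-hand side of the equation for `q⃗`: `½(√(1−‖q‖²) r + q × r)`. -/
def rhsQ (q r : Fin 3 → ℝ) : Fin 3 → ℝ :=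
  (1 / 2 : ℝ) • (Real.sqrt (1 - ∑ i, q i ^ 2) • r + crossProduct q r)

section PiSingle

variable {ι κ R : Type*} [DecidableEq ι]

theorem vecCons_zero_zero_eq_single [Zero R] (x : R) : ![x, 0, 0] = Pi.single 0 x := by
  ext i; fin_cases i <;> rfl

theorem sumElim_single_zero [DecidableEq κ] [Zero R] (i : ι) (x : R) :
    Sum.elim (Pi.single i x) (0 : κ → R) = Pi.single (Sum.inl i) x := by
  ext (j | j)
  · by_cases h : j = i
    · subst h; simp
    · simp [Pi.single_eq_of_ne h, Pi.single_eq_of_ne (Sum.inl_injective.ne h)]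
  · simp

theorem Matrix.mulVec_single_of_col_eq_zero {m : Type*} [Fintype ι] [DecidableEq m]
    [NonUnitalNonAssocSemiring R] (A : Matrix m ι R) {i₀ : m} {j : ι}
    (h : ∀ i ≠ i₀, A i j = 0) (x : R) : A *ᵥ Pi.single j x = Pi.single i₀ (A i₀ j * x) := by
  ext i
  by_cases hi : i = i₀
  · subst hi; simp
  · simp [h i hi, Pi.single_eq_of_ne hi]

theorem Matrix.smul_one_add_mulVec_single [Fintype ι] [CommSemiring R] (c : R)
    {A : Matrix ι ι R} {k : ι} (hA : ∀ i ≠ k, A i k = 0) (x : R) :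
    (c • 1 + A) *ᵥ Pi.single k x = Pi.single k ((c + A k k) * x) := by
  rw [mulVec_single_of_col_eq_zero (i₀ := k)]
  · simp
  · intro i hi
    simp [hA i hi, one_apply_ne hi]

theorem HasDerivAt.single_apply {𝕜 F : Type*} [NontriviallyNormedField 𝕜] [NormedAddCommGroup F]
    [NormedSpace 𝕜 F] {f : 𝕜 → F} {f' : F} {t : 𝕜} (hf : HasDerivAt f f' t) (j i : ι) :
    HasDerivAt (fun s => (Pi.single j (f s) : ι → F) i) ((Pi.single j f' : ι → F) i) t := by
  by_cases h : i = j
  · subst h; simpa using hf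
  · simpa [Pi.single_eq_of_ne h] using hasDerivAt_const t (0 : F)

end PiSingle

theorem single_cross_single_self {R : Type*} [CommRing R] (k : Fin 3) (a b : R) :
    Pi.single k a ⨯₃ Pi.single k b = 0 := by
  fin_cases k <;> ext i <;> fin_cases i <;> simp [cross_apply]

theorem Smat_mulVec (y x : Fin 3 → ℝ) : Smat y *ᵥ x = y ⨯₃ x := by
  ext i; fin_cases i <;> simp [Smat, cross_apply, mulVec, dotProduct, Fin.sum_univ_three] <;> ring

theorem stackM_mulVec {m : ℕ} (A B : Matrix (Fin 3) (Fin m) ℝ) (v : Fin m → ℝ) :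
    stackM A B *ᵥ v = Sum.elim (A *ᵥ v) (B *ᵥ v) := by
  ext (i | i) <;> rfl

theorem rhsH_zero_left (l : Fin 3 → ℝ) : rhsH 0 l = l := by
  simp [rhsH]

theorem rhsQ_zero_left (r : Fin 3 → ℝ) : rhsQ 0 r = (1 / 2 : ℝ) • r := by
  simp [rhsQ]

theorem Jcal_mulVec_sumElim_zero (m₀ : ℝ) (J₀ M J N : Matrix (Fin 3) (Fin 3) ℝ)
    (v : Fin 3 → ℝ) :
    Jcal m₀ J₀ M J N *ᵥ Sum.elim v 0 = Sum.elim ((m₀ • 1 + M) *ᵥ v) (Nᵀ *ᵥ v) := by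
  simp [Jcal, fromBlocks_mulVec]

theorem Cmat_mulVec_single {m : ℕ} {CM CJ : Matrix (Fin 3) (Fin m) ℝ} {k : Fin 3} {p : Fin m}
    (hCM : ∀ i ≠ k, CM i p = 0) (hCJ : ∀ i, CJ i p = 0) (x : ℝ) :
    Cmat CM CJ *ᵥ Pi.single p x = Sum.elim (Pi.single k (-(CM k p * x))) 0 := by
  rw [Cmat, neg_mulVec, stackM_mulVec, mulVec_single_of_col_eq_zero _ hCM, ← Sum.elim_neg_neg,
    Pi.single_neg]
  congr
  ext i
  simp [hCJ]

section Surge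

variable {m₀ : ℝ} {J₀ M J N : Matrix (Fin 3) (Fin 3) ℝ} {k : Fin 3}

theorem Jcal_mulVec_sumElim_single (hM : ∀ i ≠ k, M i k = 0) (hN : ∀ j, N k j = 0) (x : ℝ) :
    Jcal m₀ J₀ M J N *ᵥ Sum.elim (Pi.single k x) 0
      = Sum.elim (Pi.single k ((m₀ + M k k) * x)) 0 := by
  rw [Jcal_mulVec_sumElim_zero, smul_one_add_mulVec_single m₀ hM]
  congr
  ext i
  simp [hN]

theorem Fquad_single_zero_single {m : ℕ} {CM CJ : Matrix (Fin 3) (Fin m) ℝ}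
    {LM RM LJ RJ : Fin m → Matrix (Fin 3) (Fin 3) ℝ} {WM WJ : Fin m → Matrix (Fin 3) (Fin m) ℝ}
    {p : Fin m} (hM : ∀ i ≠ k, M i k = 0) (hCM : ∀ i ≠ k, CM i p = 0)
    (hLM : ∀ i ≠ k, LM p i k = 0) (hWM : ∀ i ≠ k, WM p i p = 0)
    (hLJ : ∀ i, LJ p i k = 0) (hWJ : ∀ i, WJ p i p = 0) (l w : ℝ) :
    Fquad m₀ J₀ M J N CM CJ LM RM LJ RJ WM WJ (Pi.single k l) 0 (Pi.single p w)
      = Sum.elim (Pi.single k (-(LM p k k * l + WM p k p * w) * w)) 0 := by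
  have hmomentum : (Jcal m₀ J₀ M J N *ᵥ Sum.elim (Pi.single k l) 0
      - Cmat CM CJ *ᵥ Pi.single p w) ∘ Sum.inl
      = Pi.single k ((m₀ + M k k) * l + CM k p * w) := by
    rw [Jcal_mulVec_sumElim_zero, Cmat, neg_mulVec, stackM_mulVec, sub_neg_eq_add,
      ← Sum.elim_add_add]
    simp only [Sum.elim_comp_inl, smul_one_add_mulVec_single m₀ hM,
      mulVec_single_of_col_eq_zero _ hCM, Pi.single_add]
  have hLJk : LJ p *ᵥ Pi.single k l = 0 := by ext i; simp [hLJ]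
  have hWJp : WJ p *ᵥ Pi.single p w = 0 := by ext i; simp [hWJ]
  rw [Fquad, fromBlocks_mulVec, hmomentum]
  simp only [Smat_mulVec, single_cross_single_self, Fintype.sum_single_smul, mulVec_zero,
    mulVec_single_of_col_eq_zero _ hLM, mulVec_single_of_col_eq_zero _ hWM, hLJk, hWJp,
    map_zero, LinearMap.zero_apply, zero_mulVec, add_zero, Sum.elim_zero_zero, neg_zero,
    zero_sub, ← Pi.single_add]
  ext (i | i)
  · simp only [Pi.neg_apply, Pi.smul_apply, Sum.elim_inl, smul_eq_mul, Pi.single_apply]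
    split_ifs <;> ring
  · simp

end Surge

theorem stmt_1_general (m : ℕ) (hm : 0 < m) (T : ℝ)
    (m₀ : ℝ) (J₀ M J N : Matrix (Fin 3) (Fin 3) ℝ)
    (CM CJ : Matrix (Fin 3) (Fin m) ℝ)
    (LM RM LJ RJ : Fin m → Matrix (Fin 3) (Fin 3) ℝ)
    (WM WJ : Fin m → Matrix (Fin 3) (Fin m) ℝ)
    -- diagonality of M, J, L₁ᴹ, R₁ᴶ
    (hM : M.IsDiag)
    (hLM1 : (LM ⟨0, hm⟩).IsDiag)
    -- N, R₁ᴹ, L₁ᴶ have nonzero entries at most in positions (2,3) and (3,2)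
    (hN : ∀ i j : Fin 3, ¬(i = 1 ∧ j = 2) → ¬(i = 2 ∧ j = 1) → N i j = 0)
    (hLJ1 : ∀ i j : Fin 3, ¬(i = 1 ∧ j = 2) → ¬(i = 2 ∧ j = 1) → LJ ⟨0, hm⟩ i j = 0)
    -- structure of the first columns of Cᴹ, Cᴶ, W₁ᴹ, W₁ᴶ
    (hCM : ∀ i : Fin 3, i ≠ 0 → CM i ⟨0, hm⟩ = 0)
    (hCJ : ∀ i : Fin 3, CJ i ⟨0, hm⟩ = 0)
    (hWM : ∀ i : Fin 3, i ≠ 0 → WM ⟨0, hm⟩ i ⟨0, hm⟩ = 0)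
    (hWJ : ∀ i : Fin 3, WJ ⟨0, hm⟩ i ⟨0, hm⟩ = 0)
    -- invertibility of 𝒥 and nondegeneracy of m₀ + M₁₁
    (hinv : IsUnit (Jcal m₀ J₀ M J N)) (hM11 : m₀ + M 0 0 ≠ 0)
    -- the coefficients α, β, γ
    (α β γ : ℝ)
    (hα : α = -(CM 0 ⟨0, hm⟩) / (m₀ + M 0 0))
    (hβ : β = -((LM ⟨0, hm⟩) 0 0) / (m₀ + M 0 0))
    (hγ : γ = -((WM ⟨0, hm⟩) 0 ⟨0, hm⟩) / (m₀ + M 0 0))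
    -- the scalar trajectory (h₁, l₁, w₁) of class C¹ on [0,T]
    (h₁ l₁ w₁ w₁' : ℝ → ℝ)
    (hw₁ : ∀ t ∈ Set.Icc (0:ℝ) T, HasDerivAt w₁ (w₁' t) t)
    (hh₁ : ∀ t ∈ Set.Icc (0:ℝ) T, HasDerivAt h₁ (l₁ t) t)
    (hl₁ : ∀ t ∈ Set.Icc (0:ℝ) T,
      HasDerivAt l₁ (α * w₁' t + β * l₁ t * w₁ t + γ * w₁ t ^ 2) t) :
    -- conclusion: the tuple (h, q⃗, l, r, w) solves the control system
    ∀ t ∈ Set.Icc (0:ℝ) T,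
      (∀ i : Fin 3, HasDerivAt (fun s => (![h₁ s, 0, 0] : Fin 3 → ℝ) i)
        (rhsH (0 : Fin 3 → ℝ) ![l₁ t, 0, 0] i) t) ∧
      (∀ i : Fin 3, HasDerivAt (fun _ : ℝ => (0 : ℝ))
        (rhsQ (0 : Fin 3 → ℝ) (0 : Fin 3 → ℝ) i) t) ∧
      (∀ j : Fin m, HasDerivAt (fun s => (Pi.single (⟨0, hm⟩ : Fin m) (w₁ s) : Fin m → ℝ) j)
        ((Pi.single (⟨0, hm⟩ : Fin m) (w₁' t) : Fin m → ℝ) j) t) ∧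
      (∀ i : Fin 3 ⊕ Fin 3,
        HasDerivAt (fun s => Sum.elim (![l₁ s, 0, 0] : Fin 3 → ℝ) (0 : Fin 3 → ℝ) i)
          (((Jcal m₀ J₀ M J N)⁻¹).mulVec
            ((Cmat CM CJ).mulVec (Pi.single (⟨0, hm⟩ : Fin m) (w₁' t))
              + Fquad m₀ J₀ M J N CM CJ LM RM LJ RJ WM WJ
                  ![l₁ t, 0, 0] (0 : Fin 3 → ℝ)
                  (Pi.single (⟨0, hm⟩ : Fin m) (w₁ t))) i) t) := by
  intro t ht
  set d := α * w₁' t + β * l₁ t * w₁ t + γ * w₁ t ^ 2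
  have hsurge : Cmat CM CJ *ᵥ Pi.single ⟨0, hm⟩ (w₁' t)
      + Fquad m₀ J₀ M J N CM CJ LM RM LJ RJ WM WJ ![l₁ t, 0, 0] 0 (Pi.single ⟨0, hm⟩ (w₁ t))
      = Jcal m₀ J₀ M J N *ᵥ Sum.elim (Pi.single 0 d) 0 := by
    rw [vecCons_zero_zero_eq_single, Cmat_mulVec_single hCM hCJ,
      Fquad_single_zero_single (fun i hi => hM hi) hCM (fun i hi => hLM1 hi) hWM
        (fun i => hLJ1 i 0 (by simp) (by simp)) hWJ,
      Jcal_mulVec_sumElim_single (fun i hi => hM hi) (fun j => hN 0 j (by simp) (by simp)),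
      ← Sum.elim_add_add, ← Pi.single_add, add_zero]
    congr 2
    simp only [d, hα, hβ, hγ]
    field_simp
    ring
  refine ⟨fun i => ?_, fun i => ?_, fun j => (hw₁ t ht).single_apply _ j, fun i => ?_⟩
  · rw [rhsH_zero_left]
    simpa only [vecCons_zero_zero_eq_single] using (hh₁ t ht).single_apply 0 i
  · rw [rhsQ_zero_left, smul_zero]
    exact hasDerivAt_const t 0
  · rw [hsurge, mulVec_mulVec, nonsing_inv_mul _ ((isUnit_iff_isUnit_det _).mp hinv),
      one_mulVec, sumElim_single_zero]
    simpa only [vecCons_zero_zero_eq_single, sumElim_single_zero]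
      using (hl₁ t ht).single_apply (Sum.inl 0) i

/-- Lemma 4.1, the toy problem. Under the symmetry-induced
sparsity assumptions on the matrices, if `h₁' = l₁` and
`l₁' = α w₁' + β l₁ w₁ + γ w₁²` on `[0,T]`, then
`(h,q⃗,l,r,w) = ((h₁,0,0), 0, (l₁,0,0), 0, (w₁,0,…,0))` solves the
underwater-vehicle control system. -/
theorem stmt_1 (m : ℕ) (hm : 0 < m) (T : ℝ)
    (m₀ : ℝ) (hm₀ : 0 < m₀) (J₀ M J N : Matrix (Fin 3) (Fin 3) ℝ)
    (CM CJ : Matrix (Fin 3) (Fin m) ℝ)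
    (LM RM LJ RJ : Fin m → Matrix (Fin 3) (Fin 3) ℝ)
    (WM WJ : Fin m → Matrix (Fin 3) (Fin m) ℝ)
    -- diagonality of M, J, L₁ᴹ, R₁ᴶ
    (hM : M.IsDiag) (hJ : J.IsDiag)
    (hLM1 : (LM ⟨0, hm⟩).IsDiag) (hRJ1 : (RJ ⟨0, hm⟩).IsDiag)
    -- N, R₁ᴹ, L₁ᴶ have nonzero entries at most in positions (2,3) and (3,2)
    (hN : ∀ i j : Fin 3, ¬(i = 1 ∧ j = 2) → ¬(i = 2 ∧ j = 1) → N i j = 0)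
    (hRM1 : ∀ i j : Fin 3, ¬(i = 1 ∧ j = 2) → ¬(i = 2 ∧ j = 1) → RM ⟨0, hm⟩ i j = 0)
    (hLJ1 : ∀ i j : Fin 3, ¬(i = 1 ∧ j = 2) → ¬(i = 2 ∧ j = 1) → LJ ⟨0, hm⟩ i j = 0)
    -- structure of the first columns of Cᴹ, Cᴶ, W₁ᴹ, W₁ᴶ
    (hCM : ∀ i : Fin 3, i ≠ 0 → CM i ⟨0, hm⟩ = 0)
    (hCJ : ∀ i : Fin 3, CJ i ⟨0, hm⟩ = 0)
    (hWM : ∀ i : Fin 3, i ≠ 0 → WM ⟨0, hm⟩ i ⟨0, hm⟩ = 0)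
    (hWJ : ∀ i : Fin 3, WJ ⟨0, hm⟩ i ⟨0, hm⟩ = 0)
    -- invertibility of 𝒥 and nondegeneracy of m₀ + M₁₁
    (hinv : IsUnit (Jcal m₀ J₀ M J N)) (hM11 : m₀ + M 0 0 ≠ 0)
    -- the coefficients α, β, γ
    (α β γ : ℝ)
    (hα : α = -(CM 0 ⟨0, hm⟩) / (m₀ + M 0 0))
    (hβ : β = -((LM ⟨0, hm⟩) 0 0) / (m₀ + M 0 0))
    (hγ : γ = -((WM ⟨0, hm⟩) 0 ⟨0, hm⟩) / (m₀ + M 0 0))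
    -- the scalar trajectory (h₁, l₁, w₁) of class C¹ on [0,T]
    (h₁ l₁ w₁ w₁' : ℝ → ℝ)
    (hw₁c : ContinuousOn w₁' (Set.Icc 0 T))
    (hw₁ : ∀ t ∈ Set.Icc (0:ℝ) T, HasDerivAt w₁ (w₁' t) t)
    (hh₁ : ∀ t ∈ Set.Icc (0:ℝ) T, HasDerivAt h₁ (l₁ t) t)
    (hl₁ : ∀ t ∈ Set.Icc (0:ℝ) T,
      HasDerivAt l₁ (α * w₁' t + β * l₁ t * w₁ t + γ * w₁ t ^ 2) t) :
    -- conclusion: the tuple (h, q⃗, l, r, w) solves the control system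
    ∀ t ∈ Set.Icc (0:ℝ) T,
      (∀ i : Fin 3, HasDerivAt (fun s => (![h₁ s, 0, 0] : Fin 3 → ℝ) i)
        (rhsH (0 : Fin 3 → ℝ) ![l₁ t, 0, 0] i) t) ∧
      (∀ i : Fin 3, HasDerivAt (fun _ : ℝ => (0 : ℝ))
        (rhsQ (0 : Fin 3 → ℝ) (0 : Fin 3 → ℝ) i) t) ∧
      (∀ j : Fin m, HasDerivAt (fun s => (Pi.single (⟨0, hm⟩ : Fin m) (w₁ s) : Fin m → ℝ) j)
        ((Pi.single (⟨0, hm⟩ : Fin m) (w₁' t) : Fin m → ℝ) j) t) ∧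
      (∀ i : Fin 3 ⊕ Fin 3,
        HasDerivAt (fun s => Sum.elim (![l₁ s, 0, 0] : Fin 3 → ℝ) (0 : Fin 3 → ℝ) i)
          (((Jcal m₀ J₀ M J N)⁻¹).mulVec
            ((Cmat CM CJ).mulVec (Pi.single (⟨0, hm⟩ : Fin m) (w₁' t))
              + Fquad m₀ J₀ M J N CM CJ LM RM LJ RJ WM WJ
                  ![l₁ t, 0, 0] (0 : Fin 3 → ℝ)
                  (Pi.single (⟨0, hm⟩ : Fin m) (w₁ t))) i) t) :=
  stmt_1_general m hm T m₀ J₀ M J N CM CJ LM RM LJ RJ WM WJ hM hLM1 hN hLJ1 hCM hCJ hWM hWJ hinv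
    hM11 α β γ hα hβ hγ h₁ l₁ w₁ w₁' hw₁ hh₁ hl₁

end
end

section
/- Let m ≥ 1, T ∈ ℝ, Ĉ ∈ ℝ^{6×m}, and let Â, D : ℝ → ℝ^{6×6} and B̂ : ℝ → ℝ^{6×m} be C^∞ functions such that all even-order derivatives vanish at T: Â^{(2l)}(T) = 0, D^{(2l)}(T) = 0 and B̂^{(2l)}(T) = 0 for every l ∈ ℕ (including l = 0). Define U₀(t) = Ĉ (constant), V₀(t) = B̂(t) + Â(t)Ĉ, and recursively for i ≥ 1: U_i(t) = U_{i−1}'(t) − D(t)U_{i−1}(t) − V_{i−1}(t) and V_i(t) = V_{i−1}'(t) − Â(t)V_{i−1}(t). Then for all k, l ∈ ℕ: V_{2k}^{(2l)}(T) = 0, V_{2k+1}^{(2l+1)}(T) = 0, U_{2k+1}^{(2l)}(T) = 0, and U_{2k}^{(2l+1)}(T) = 0. -/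
open scoped ContDiff

attribute [local instance] Matrix.normedAddCommGroup Matrix.normedSpace

section AuxParity

variable {E F G : Type*} [NormedAddCommGroup E] [NormedSpace ℝ E]
  [NormedAddCommGroup F] [NormedSpace ℝ F]
  [NormedAddCommGroup G] [NormedSpace ℝ G]

/-- `Par T a f` : every derivative of `f` of order `≡ a (mod 2)` vanishes at `T`. -/
def Par (T : ℝ) (a : ℕ) (f : ℝ → F) : Prop :=
  ∀ j : ℕ, j % 2 = a % 2 → iteratedDeriv j f T = 0

lemma Par.of_mod {T : ℝ} {a b : ℕ} {f : ℝ → F} (hab : a % 2 = b % 2)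
    (hf : Par T a f) : Par T b f :=
  fun j hj => hf j (by omega)

lemma Par.congr_fun {T : ℝ} {a : ℕ} {f g : ℝ → F} (h : ∀ t, f t = g t)
    (hf : Par T a f) : Par T a g := by
  have : f = g := funext h
  rwa [← this]

lemma Par.deriv {T : ℝ} {a : ℕ} {f : ℝ → F} (hf : Par T a f) :
    Par T (a + 1) (deriv f) := by
  intro j hj
  have h := hf (j + 1) (by omega)
  rwa [iteratedDeriv_succ'] at h

lemma iteratedDeriv_add_apply' {n : ℕ} {f g : ℝ → F} (hf : ContDiff ℝ n f)
    (hg : ContDiff ℝ n g) (x : ℝ) :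
    iteratedDeriv n (fun t => f t + g t) x = iteratedDeriv n f x + iteratedDeriv n g x := by
  have : (fun t => f t + g t) = f + g := rfl
  rw [this, ← iteratedDerivWithin_univ, ← iteratedDerivWithin_univ, ← iteratedDerivWithin_univ]
  exact iteratedDerivWithin_add (Set.mem_univ x) uniqueDiffOn_univ
    hf.contDiffWithinAt hg.contDiffWithinAt

lemma Par.add {T : ℝ} {a : ℕ} {f g : ℝ → F} (hf : ContDiff ℝ ∞ f) (hg : ContDiff ℝ ∞ g)
    (hfa : Par T a f) (hga : Par T a g) : Par T a (fun t => f t + g t) := by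
  intro j hj
  rw [iteratedDeriv_add_apply' (hf.of_le (by exact_mod_cast le_top))
    (hg.of_le (by exact_mod_cast le_top)), hfa j hj, hga j hj, add_zero]

lemma Par.neg {T : ℝ} {a : ℕ} {f : ℝ → F} (hfa : Par T a f) :
    Par T a (fun t => -(f t)) := by
  intro j hj
  rw [iteratedDeriv_fun_neg, hfa j hj, neg_zero]

lemma Par.sub {T : ℝ} {a : ℕ} {f g : ℝ → F} (hf : ContDiff ℝ ∞ f) (hg : ContDiff ℝ ∞ g)
    (hfa : Par T a f) (hga : Par T a g) : Par T a (fun t => f t - g t) := by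
  have := (hfa.add hf hg.neg hga.neg : Par T a fun t => f t + -(g t))
  exact this.congr_fun (fun t => by rw [← sub_eq_add_neg])

lemma iteratedDeriv_zero_fun' (n : ℕ) (x : ℝ) :
    iteratedDeriv n (fun _ : ℝ => (0 : F)) x = 0 := by
  induction n generalizing x with
  | zero => rw [iteratedDeriv_zero]
  | succ n ih =>
      rw [iteratedDeriv_succ',
        show deriv (fun _ : ℝ => (0 : F)) = fun _ : ℝ => (0 : F) from
          funext fun t => deriv_const t 0]
      exact ih x

lemma Par.const (T : ℝ) (c : F) : Par T 1 (fun _ => c) := by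
  intro j hj
  obtain ⟨i, rfl⟩ : ∃ i, j = i + 1 := ⟨j - 1, by omega⟩
  rw [iteratedDeriv_succ',
    show _root_.deriv (fun _ : ℝ => c) = fun _ : ℝ => (0 : F) from
      funext fun t => deriv_const t c]
  exact iteratedDeriv_zero_fun' i T

lemma ContDiff.infty_deriv {f : ℝ → F} (hf : ContDiff ℝ ∞ f) :
    ContDiff ℝ ∞ (deriv f) := (contDiff_infty_iff_deriv.mp hf).2

lemma ContDiff.bilin_apply (B : E →L[ℝ] F →L[ℝ] G) {f : ℝ → E} {g : ℝ → F}
    {n : WithTop ℕ∞} (hf : ContDiff ℝ n f) (hg : ContDiff ℝ n g) :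
    ContDiff ℝ n (fun t => B (f t) (g t)) :=
  (B.contDiff.comp hf).clm_apply hg

lemma Par.bilin (B : E →L[ℝ] F →L[ℝ] G) {T : ℝ} {a b : ℕ} {f : ℝ → E} {g : ℝ → F}
    (hf : ContDiff ℝ ∞ f) (hg : ContDiff ℝ ∞ g)
    (hfa : Par T a f) (hgb : Par T b g) :
    Par T (a + b + 1) (fun t => B (f t) (g t)) := by
  intro n
  induction n generalizing f g a b with
  | zero =>
      intro hn
      rw [iteratedDeriv_zero]
      have hor : a % 2 = 0 ∨ b % 2 = 0 := by omega
      rcases hor with h | h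
      · have := hfa 0 (by omega)
        rw [iteratedDeriv_zero] at this
        rw [this]; simp
      · have := hgb 0 (by omega)
        rw [iteratedDeriv_zero] at this
        rw [this]; simp
  | succ n ih =>
      intro hn
      rw [iteratedDeriv_succ']
      have hdf : ContDiff ℝ ∞ (_root_.deriv f) := hf.infty_deriv
      have hdg : ContDiff ℝ ∞ (_root_.deriv g) := hg.infty_deriv
      have hder : _root_.deriv (fun t => B (f t) (g t)) =
          fun t => B (f t) (_root_.deriv g t) + B (_root_.deriv f t) (g t) := by
        funext t
        exact ContinuousLinearMap.deriv_of_bilinear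
          (fun _ => hf.differentiable (by simp) t)
          (fun _ => hg.differentiable (by simp) t)
      rw [hder]
      have h1 : iteratedDeriv n (fun t => B (f t) (_root_.deriv g t)) T = 0 :=
        ih hf hdg hfa hgb.deriv (by omega)
      have h2 : iteratedDeriv n (fun t => B (_root_.deriv f t) (g t)) T = 0 :=
        ih hdf hg hfa.deriv hgb (by omega)
      rw [iteratedDeriv_add_apply'
        ((ContDiff.bilin_apply B hf hdg).of_le (by exact_mod_cast le_top))
        ((ContDiff.bilin_apply B hdf hg).of_le (by exact_mod_cast le_top)), h1, h2, add_zero]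

end AuxParity

section MulCLM

variable (m : ℕ)

/-- Matrix multiplication `M₆₆ × M₆ₘ → M₆ₘ` as a continuous bilinear map. -/
noncomputable def mulCLM :
    Matrix (Fin 6) (Fin 6) ℝ →L[ℝ] Matrix (Fin 6) (Fin m) ℝ →L[ℝ] Matrix (Fin 6) (Fin m) ℝ :=
  LinearMap.toContinuousLinearMap
    { toFun := fun A => LinearMap.toContinuousLinearMap
        { toFun := fun X => A * X
          map_add' := fun X Y => Matrix.mul_add A X Y
          map_smul' := fun c X => (Matrix.mul_smul A c X).trans rfl }
      map_add' := fun A B => ContinuousLinearMap.ext fun X => Matrix.add_mul A B X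
      map_smul' := fun c A => ContinuousLinearMap.ext fun X => Matrix.smul_mul c A X }

@[simp] lemma mulCLM_apply (A : Matrix (Fin 6) (Fin 6) ℝ) (X : Matrix (Fin 6) (Fin m) ℝ) :
    mulCLM m A X = A * X := rfl

end MulCLM

/-- Proposition 3.5 of the paper. If all even-order
derivatives of `Ahat`, `D` and `Bhat` vanish at `T`, then the sequences
`U₀ ≡ Chat`, `V₀ = Bhat + Ahat Chat`, `U_i = U_{i−1}' − D U_{i−1} − V_{i−1}`,
`V_i = V_{i−1}' − Ahat V_{i−1}` satisfy `V_{2k}^{(2l)}(T) = 0`,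
`V_{2k+1}^{(2l+1)}(T) = 0`, `U_{2k+1}^{(2l)}(T) = 0` and
`U_{2k}^{(2l+1)}(T) = 0` for all `k, l ∈ ℕ`. -/
theorem stmt_4 (m : ℕ) (hm : 1 ≤ m) (T : ℝ)
    (Chat : Matrix (Fin 6) (Fin m) ℝ)
    (Ahat D : ℝ → Matrix (Fin 6) (Fin 6) ℝ)
    (Bhat : ℝ → Matrix (Fin 6) (Fin m) ℝ)
    (hAhat : ContDiff ℝ (⊤ : ℕ∞) Ahat) (hD : ContDiff ℝ (⊤ : ℕ∞) D) (hBhat : ContDiff ℝ (⊤ : ℕ∞) Bhat)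
    (hAhatT : ∀ l : ℕ, iteratedDeriv (2 * l) Ahat T = 0)
    (hDT : ∀ l : ℕ, iteratedDeriv (2 * l) D T = 0)
    (hBhatT : ∀ l : ℕ, iteratedDeriv (2 * l) Bhat T = 0)
    (U V : ℕ → ℝ → Matrix (Fin 6) (Fin m) ℝ)
    (hU0 : ∀ t, U 0 t = Chat)
    (hV0 : ∀ t, V 0 t = Bhat t + Ahat t * Chat)
    (hUrec : ∀ (i : ℕ) (t : ℝ), U (i + 1) t = deriv (U i) t - D t * U i t - V i t)
    (hVrec : ∀ (i : ℕ) (t : ℝ), V (i + 1) t = deriv (V i) t - Ahat t * V i t) :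
    ∀ k l : ℕ,
      iteratedDeriv (2 * l) (V (2 * k)) T = 0 ∧
      iteratedDeriv (2 * l + 1) (V (2 * k + 1)) T = 0 ∧
      iteratedDeriv (2 * l) (U (2 * k + 1)) T = 0 ∧
      iteratedDeriv (2 * l + 1) (U (2 * k)) T = 0 := by
  have hA' : ContDiff ℝ ∞ Ahat := hAhat.of_le (by simp)
  have hD' : ContDiff ℝ ∞ D := hD.of_le (by simp)
  have hB' : ContDiff ℝ ∞ Bhat := hBhat.of_le (by simp)
  have hParA : Par T 0 Ahat := by
    intro j hj
    obtain ⟨l, rfl⟩ : ∃ l, j = 2 * l := ⟨j / 2, by omega⟩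
    exact hAhatT l
  have hParD : Par T 0 D := by
    intro j hj
    obtain ⟨l, rfl⟩ : ∃ l, j = 2 * l := ⟨j / 2, by omega⟩
    exact hDT l
  have hParB : Par T 0 Bhat := by
    intro j hj
    obtain ⟨l, rfl⟩ : ∃ l, j = 2 * l := ⟨j / 2, by omega⟩
    exact hBhatT l
  have hParC : Par T 1 (fun _ : ℝ => Chat) := Par.const T Chat
  have hCsmooth : ContDiff ℝ ∞ (fun _ : ℝ => Chat) := contDiff_const
  -- V_i : smooth and parity i ; then U_i : smooth and parity i+1
  have hVmain : ∀ i : ℕ, ContDiff ℝ ∞ (V i) ∧ Par T i (V i) := by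
    intro i
    induction i with
    | zero =>
        have heq : V 0 = fun t => Bhat t + mulCLM m (Ahat t) ((fun _ : ℝ => Chat) t) := by
          funext t; exact hV0 t
        constructor
        · rw [heq]
          exact hB'.add (ContDiff.bilin_apply (mulCLM m) hA' hCsmooth)
        · have hAC : Par T (0 + 1 + 1) (fun t => mulCLM m (Ahat t) ((fun _ : ℝ => Chat) t)) :=
            Par.bilin (mulCLM m) hA' hCsmooth hParA hParC
          have := (hParB.add hB' (ContDiff.bilin_apply (mulCLM m) hA' hCsmooth)
            (hAC.of_mod (by omega)))
          exact (this.congr_fun (fun t => (hV0 t).symm)).of_mod rfl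
    | succ i ih =>
        obtain ⟨ihS, ihP⟩ := ih
        have heq : V (i + 1) = fun t => deriv (V i) t - mulCLM m (Ahat t) (V i t) := by
          funext t; exact hVrec i t
        have hdS : ContDiff ℝ ∞ (deriv (V i)) := ihS.infty_deriv
        have hprodS : ContDiff ℝ ∞ (fun t => mulCLM m (Ahat t) (V i t)) :=
          ContDiff.bilin_apply (mulCLM m) hA' ihS
        constructor
        · rw [heq]; exact hdS.sub hprodS
        · have h1 : Par T (i + 1) (deriv (V i)) := ihP.deriv
          have h2 : Par T (0 + i + 1) (fun t => mulCLM m (Ahat t) (V i t)) :=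
            Par.bilin (mulCLM m) hA' ihS hParA ihP
          have := h1.sub hdS hprodS (h2.of_mod (by omega))
          rw [← heq] at this
          exact this
  have hUmain : ∀ i : ℕ, ContDiff ℝ ∞ (U i) ∧ Par T (i + 1) (U i) := by
    intro i
    induction i with
    | zero =>
        have heq : U 0 = fun _ : ℝ => Chat := funext hU0
        rw [heq]
        exact ⟨hCsmooth, hParC⟩
    | succ i ih =>
        obtain ⟨ihS, ihP⟩ := ih
        obtain ⟨hViS, hViP⟩ := hVmain i
        have heq : U (i + 1) =
            fun t => (deriv (U i) t - mulCLM m (D t) (U i t)) - V i t := by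
          funext t; exact hUrec i t
        have hdS : ContDiff ℝ ∞ (deriv (U i)) := ihS.infty_deriv
        have hprodS : ContDiff ℝ ∞ (fun t => mulCLM m (D t) (U i t)) :=
          ContDiff.bilin_apply (mulCLM m) hD' ihS
        constructor
        · rw [heq]; exact (hdS.sub hprodS).sub hViS
        · have h1 : Par T (i + 2) (deriv (U i)) := ihP.deriv
          have h2 : Par T (0 + (i + 1) + 1) (fun t => mulCLM m (D t) (U i t)) :=
            Par.bilin (mulCLM m) hD' ihS hParD ihP
          have h12 : Par T (i + 2) (fun t => deriv (U i) t - mulCLM m (D t) (U i t)) :=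
            h1.sub hdS hprodS (h2.of_mod (by omega))
          have h3 : Par T (i + 2) (V i) := hViP.of_mod (by omega)
          have := h12.sub (hdS.sub hprodS) hViS h3
          rw [← heq] at this
          exact this
  intro k l
  refine ⟨(hVmain (2 * k)).2 (2 * l) (by omega),
    (hVmain (2 * k + 1)).2 (2 * l + 1) (by omega),
    (hUmain (2 * k + 1)).2 (2 * l) (by omega),
    (hUmain (2 * k)).2 (2 * l + 1) (by omega)⟩
end

section
/- Let m ≥ 1, T ∈ ℝ, and let Â : ℝ → ℝ^{6×6} and V₀ : ℝ → ℝ^{6×m} be C^∞ functions such that Â^{(k)}(T) = 0 and V₀^{(k)}(T) = 0 for every k ∈ ℕ with k ≠ 1 (including k = 0). Define recursively V_i(t) = V_{i−1}'(t) − Â(t)V_{i−1}(t) for i ≥ 1. Then: V₁(T) = V₀'(T); V₃(T) = −3 Â'(T) V₀'(T); V₅(T) = 15 Â'(T)² V₀'(T); and V₇(T) = −105 Â'(T)³ V₀'(T). -/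
attribute [local instance] Matrix.normedAddCommGroup Matrix.normedSpace

open scoped ContDiff

section Aux

variable {m : ℕ}

private lemma natLe (n : ℕ) : (n : WithTop ℕ∞) ≤ ∞ := by
  exact_mod_cast (le_top : (n : ℕ∞) ≤ ⊤)

private lemma natLt (n : ℕ) : (n : WithTop ℕ∞) < ∞ := by
  exact_mod_cast (WithTop.coe_lt_top (n : ℕ))

/-- Matrix multiplication as a continuous bilinear map. -/
private noncomputable def mulL (m : ℕ) :
    Matrix (Fin 6) (Fin 6) ℝ →L[ℝ] Matrix (Fin 6) (Fin m) ℝ →L[ℝ] Matrix (Fin 6) (Fin m) ℝ :=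
  LinearMap.toContinuousLinearMap
    { toFun := fun A => LinearMap.toContinuousLinearMap
        { toFun := fun B => A * B
          map_add' := fun B C => Matrix.mul_add A B C
          map_smul' := fun c B => Matrix.mul_smul A c B }
      map_add' := fun A A' => by
        ext B j i
        simp [Matrix.add_mul]
      map_smul' := fun c A => by
        ext B j i
        simp [Matrix.smul_mul] }

@[simp] private lemma mulL_apply (A : Matrix (Fin 6) (Fin 6) ℝ)
    (B : Matrix (Fin 6) (Fin m) ℝ) : mulL m A B = A * B := rfl

private lemma hasDerivAt_matmul {f : ℝ → Matrix (Fin 6) (Fin 6) ℝ}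
    {g : ℝ → Matrix (Fin 6) (Fin m) ℝ} {f' : Matrix (Fin 6) (Fin 6) ℝ}
    {g' : Matrix (Fin 6) (Fin m) ℝ} {t : ℝ}
    (hf : HasDerivAt f f' t) (hg : HasDerivAt g g' t) :
    HasDerivAt (fun s => f s * g s) (f t * g' + f' * g t) t := by
  exact (mulL m).hasDerivAt_of_bilinear (fun _ => hf) (fun _ => hg)

private lemma contDiff_matmul {f : ℝ → Matrix (Fin 6) (Fin 6) ℝ}
    {g : ℝ → Matrix (Fin 6) (Fin m) ℝ}
    (hf : ContDiff ℝ ∞ f) (hg : ContDiff ℝ ∞ g) :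
    ContDiff ℝ ∞ (fun t => f t * g t) := by
  have := ((mulL m).isBoundedBilinearMap.contDiff (n := ∞)).comp (hf.prodMk hg)
  exact this

private lemma iteratedDeriv_sub' {F : Type*} [NormedAddCommGroup F] [NormedSpace ℝ F]
    {f g : ℝ → F} (hf : ContDiff ℝ ∞ f) (hg : ContDiff ℝ ∞ g) (n : ℕ) (x : ℝ) :
    iteratedDeriv n (f - g) x = iteratedDeriv n f x - iteratedDeriv n g x := by
  have h1 := iteratedDerivWithin_sub (Set.mem_univ x) uniqueDiffOn_univ
    ((hf.of_le (natLe n)).contDiffWithinAt) ((hg.of_le (natLe n)).contDiffWithinAt)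
  simpa [iteratedDerivWithin_univ] using h1

/-- Pascal-style reindexing of a binomial sum. -/
private lemma pascal {G : Type*} [AddCommGroup G] [Module ℝ G] (n : ℕ) (c : ℕ → ℕ → G) :
    ∑ k ∈ Finset.range (n + 1), (n.choose k : ℝ) • (c k (n - k + 1) + c (k + 1) (n - k))
      = ∑ k ∈ Finset.range (n + 2), ((n + 1).choose k : ℝ) • c k (n + 1 - k) := by
  have h1 : ∑ k ∈ Finset.range (n + 1), (n.choose k : ℝ) • c k (n - k + 1)
      = (∑ k ∈ Finset.range (n + 1), (n.choose (k + 1) : ℝ) • c (k + 1) (n - k)) + c 0 (n + 1) := by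
    calc ∑ k ∈ Finset.range (n + 1), (n.choose k : ℝ) • c k (n - k + 1)
        = (∑ k ∈ Finset.range n, (n.choose (k + 1) : ℝ) • c (k + 1) (n - (k + 1) + 1))
            + (n.choose 0 : ℝ) • c 0 (n - 0 + 1) :=
          Finset.sum_range_succ' _ n
      _ = (∑ k ∈ Finset.range n, (n.choose (k + 1) : ℝ) • c (k + 1) (n - k)) + c 0 (n + 1) := by
          congr 1
          · refine Finset.sum_congr rfl fun k hk => ?_
            have hk' := Finset.mem_range.mp hk
            congr 2
            omega
          · simp
      _ = (∑ k ∈ Finset.range (n + 1), (n.choose (k + 1) : ℝ) • c (k + 1) (n - k))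
            + c 0 (n + 1) := by
          rw [Finset.sum_range_succ]
          simp [Nat.choose_succ_self]
  have h2 : ∀ k ∈ Finset.range (n + 1),
      ((n + 1).choose (k + 1) : ℝ) • c (k + 1) (n + 1 - (k + 1))
        = (n.choose k : ℝ) • c (k + 1) (n - k) + (n.choose (k + 1) : ℝ) • c (k + 1) (n - k) := by
    intro k _
    rw [Nat.succ_sub_succ, Nat.choose_succ_succ]
    push_cast
    rw [add_smul]
  rw [Finset.sum_range_succ' (fun k => ((n + 1).choose k : ℝ) • c k (n + 1 - k)) (n + 1)]
  simp only [smul_add, Finset.sum_add_distrib, h1]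
  rw [Finset.sum_congr rfl h2, Finset.sum_add_distrib]
  simp only [Nat.choose_zero_right, Nat.cast_one, one_smul, Nat.add_sub_cancel_left,
    Nat.sub_zero]
  abel

/-- Leibniz rule for iterated derivatives of a matrix product. -/
private lemma leibniz {f : ℝ → Matrix (Fin 6) (Fin 6) ℝ} {g : ℝ → Matrix (Fin 6) (Fin m) ℝ}
    (hf : ContDiff ℝ ∞ f) (hg : ContDiff ℝ ∞ g) (n : ℕ) (t : ℝ) :
    iteratedDeriv n (fun s => f s * g s) t
      = ∑ k ∈ Finset.range (n + 1),
          (n.choose k : ℝ) • (iteratedDeriv k f t * iteratedDeriv (n - k) g t) := by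
  have Hf : ∀ (k : ℕ) (s : ℝ), HasDerivAt (iteratedDeriv k f) (iteratedDeriv (k + 1) f s) s := by
    intro k s
    rw [iteratedDeriv_succ]
    exact ((hf.differentiable_iteratedDeriv k (natLt k)) s).hasDerivAt
  have Hg : ∀ (k : ℕ) (s : ℝ), HasDerivAt (iteratedDeriv k g) (iteratedDeriv (k + 1) g s) s := by
    intro k s
    rw [iteratedDeriv_succ]
    exact ((hg.differentiable_iteratedDeriv k (natLt k)) s).hasDerivAt
  induction n generalizing t with
  | zero => simp
  | succ n ih =>
    rw [iteratedDeriv_succ]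
    have heq : deriv (iteratedDeriv n fun s => f s * g s) t
        = deriv (fun s => ∑ k ∈ Finset.range (n + 1),
            (n.choose k : ℝ) • (iteratedDeriv k f s * iteratedDeriv (n - k) g s)) t := by
      congr 1
      funext s
      exact ih s
    have big : HasDerivAt (fun s => ∑ k ∈ Finset.range (n + 1),
          (n.choose k : ℝ) • (iteratedDeriv k f s * iteratedDeriv (n - k) g s))
        (∑ k ∈ Finset.range (n + 1), (n.choose k : ℝ) •
          (iteratedDeriv k f t * iteratedDeriv (n - k + 1) g t
            + iteratedDeriv (k + 1) f t * iteratedDeriv (n - k) g t)) t :=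
      HasDerivAt.fun_sum fun k _ => (hasDerivAt_matmul (Hf k t) (Hg (n - k) t)).fun_const_smul _
    refine heq.trans (big.deriv.trans ?_)
    exact pascal n fun i j => iteratedDeriv i f t * iteratedDeriv j g t

/-- At the point `T` where all derivatives of `Ahat` of order `≠ 1` vanish, the Leibniz
sum collapses to a single term. -/
private lemma collapse {Ahat : ℝ → Matrix (Fin 6) (Fin 6) ℝ}
    {g : ℝ → Matrix (Fin 6) (Fin m) ℝ} {T : ℝ}
    (hA : ContDiff ℝ ∞ Ahat) (hg : ContDiff ℝ ∞ g)
    (hAT : ∀ k : ℕ, k ≠ 1 → iteratedDeriv k Ahat T = 0) (k : ℕ) :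
    iteratedDeriv k (fun t => Ahat t * g t) T
      = (k : ℝ) • (deriv Ahat T * iteratedDeriv (k - 1) g T) := by
  rw [leibniz hA hg k T]
  rw [Finset.sum_eq_single 1]
  · simp [Nat.choose_one_right]
    rfl
  · intro b _ hb
    rw [hAT b hb, Matrix.zero_mul, smul_zero]
  · intro h1
    have hk : k = 0 := by
      by_contra h
      exact h1 (Finset.mem_range.mpr (by omega))
    subst hk
    simp

end Aux

/-- Proposition 5.1 of the paper, Appendix. If every
derivative of `Â` and of `V₀` of order `≠ 1` vanishes at `T` (including the
value itself), then the sequence `V_i = V_{i−1}' − Â V_{i−1}` satisfies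
`V₁(T) = V₀'(T)`, `V₃(T) = −3 Â'(T) V₀'(T)`, `V₅(T) = 15 Â'(T)² V₀'(T)` and
`V₇(T) = −105 Â'(T)³ V₀'(T)`. -/
theorem stmt_5 (m : ℕ) (hm : 1 ≤ m) (T : ℝ)
    (Ahat : ℝ → Matrix (Fin 6) (Fin 6) ℝ)
    (V : ℕ → ℝ → Matrix (Fin 6) (Fin m) ℝ)
    (hAhat : ContDiff ℝ (⊤ : ℕ∞) Ahat) (hV0 : ContDiff ℝ (⊤ : ℕ∞) (V 0))
    (hAhatT : ∀ k : ℕ, k ≠ 1 → iteratedDeriv k Ahat T = 0)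
    (hV0T : ∀ k : ℕ, k ≠ 1 → iteratedDeriv k (V 0) T = 0)
    (hVrec : ∀ (i : ℕ) (t : ℝ), V (i + 1) t = deriv (V i) t - Ahat t * V i t) :
    V 1 T = deriv (V 0) T ∧
    V 3 T = (-3 : ℝ) • (deriv Ahat T * deriv (V 0) T) ∧
    V 5 T = (15 : ℝ) • (deriv Ahat T ^ 2 * deriv (V 0) T) ∧
    V 7 T = (-105 : ℝ) • (deriv Ahat T ^ 3 * deriv (V 0) T) := by
  have hA : ContDiff ℝ ∞ Ahat := hAhat.of_le (by simp)
  -- smoothness of each `V i`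
  have hV : ∀ i, ContDiff ℝ ∞ (V i) := by
    intro i
    induction i with
    | zero => exact hV0.of_le (by simp)
    | succ i ih =>
      have hEq : V (i + 1) = fun t => deriv (V i) t - Ahat t * V i t := funext (hVrec i)
      rw [hEq]
      exact ((contDiff_infty_iff_deriv.mp ih).2).sub (contDiff_matmul hA ih)
  set A := deriv Ahat T with hAdef
  set D := deriv (V 0) T with hDdef
  -- the basic recurrence for iterated derivatives at T
  have hrec : ∀ i k, iteratedDeriv k (V (i + 1)) T
      = iteratedDeriv (k + 1) (V i) T - (k : ℝ) • (A * iteratedDeriv (k - 1) (V i) T) := by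
    intro i k
    have h1 : V (i + 1) = (fun t => deriv (V i) t) - fun t => Ahat t * V i t := by
      funext t
      exact hVrec i t
    have h2 : ContDiff ℝ ∞ fun t => deriv (V i) t := (contDiff_infty_iff_deriv.mp (hV i)).2
    rw [h1, iteratedDeriv_sub' h2 (contDiff_matmul hA (hV i)) k T,
      collapse hA (hV i) hAhatT k, iteratedDeriv_succ']
    rfl
  -- derivative of V 0 at T, order 1, in terms of D
  have hrec' : ∀ i k k' k'' : ℕ, k + 1 = k' → k - 1 = k'' →
      iteratedDeriv k (V (i + 1)) T
        = iteratedDeriv k' (V i) T - (k : ℝ) • (A * iteratedDeriv k'' (V i) T) := by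
    intro i k k' k'' h1 h2
    subst h1
    subst h2
    exact hrec i k
  have e01 : iteratedDeriv 1 (V 0) T = D := by simp [hDdef]; rfl
  have e10 : iteratedDeriv 0 (V 1) T = D := by
    rw [hrec' 0 0 1 0 rfl rfl, e01, hV0T 0 (by norm_num)]
    simp
  have e11 : iteratedDeriv 1 (V 1) T = 0 := by
    rw [hrec' 0 1 2 0 rfl rfl, hV0T 2 (by norm_num), hV0T 0 (by norm_num)]
    simp
  have e12 : iteratedDeriv 2 (V 1) T = (-2 : ℝ) • (A * D) := by
    rw [hrec' 0 2 3 1 rfl rfl, hV0T 3 (by norm_num), e01]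
    push_cast
    try simp only [Matrix.mul_smul, smul_smul, Matrix.mul_zero, smul_zero, zero_sub, sub_zero]
    try module
    try simp
  have e13 : iteratedDeriv 3 (V 1) T = 0 := by
    rw [hrec' 0 3 4 2 rfl rfl, hV0T 4 (by norm_num), hV0T 2 (by norm_num)]
    simp
  have e14 : iteratedDeriv 4 (V 1) T = 0 := by
    rw [hrec' 0 4 5 3 rfl rfl, hV0T 5 (by norm_num), hV0T 3 (by norm_num)]
    simp
  have e15 : iteratedDeriv 5 (V 1) T = 0 := by
    rw [hrec' 0 5 6 4 rfl rfl, hV0T 6 (by norm_num), hV0T 4 (by norm_num)]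
    simp
  have e16 : iteratedDeriv 6 (V 1) T = 0 := by
    rw [hrec' 0 6 7 5 rfl rfl, hV0T 7 (by norm_num), hV0T 5 (by norm_num)]
    simp
  have e20 : iteratedDeriv 0 (V 2) T = 0 := by
    rw [hrec' 1 0 1 0 rfl rfl, e11, e10]
    simp
  have e21 : iteratedDeriv 1 (V 2) T = (-3 : ℝ) • (A * D) := by
    rw [hrec' 1 1 2 0 rfl rfl, e12, e10]
    push_cast
    try simp only [Matrix.mul_smul, smul_smul, Matrix.mul_zero, smul_zero, zero_sub, sub_zero]
    try module
    try simp
  have e22 : iteratedDeriv 2 (V 2) T = 0 := by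
    rw [hrec' 1 2 3 1 rfl rfl, e13, e11]
    simp
  have e23 : iteratedDeriv 3 (V 2) T = (6 : ℝ) • (A * (A * D)) := by
    rw [hrec' 1 3 4 2 rfl rfl, e14, e12]
    push_cast
    try simp only [Matrix.mul_smul, smul_smul, Matrix.mul_zero, smul_zero, zero_sub, sub_zero]
    try module
    try simp
  have e24 : iteratedDeriv 4 (V 2) T = 0 := by
    rw [hrec' 1 4 5 3 rfl rfl, e15, e13]
    simp
  have e25 : iteratedDeriv 5 (V 2) T = 0 := by
    rw [hrec' 1 5 6 4 rfl rfl, e16, e14]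
    simp
  have e30 : iteratedDeriv 0 (V 3) T = (-3 : ℝ) • (A * D) := by
    rw [hrec' 2 0 1 0 rfl rfl, e21, e20]
    push_cast
    try simp only [Matrix.mul_smul, smul_smul, Matrix.mul_zero, smul_zero, zero_sub, sub_zero]
    try module
    try simp
  have e31 : iteratedDeriv 1 (V 3) T = 0 := by
    rw [hrec' 2 1 2 0 rfl rfl, e22, e20]
    simp
  have e32 : iteratedDeriv 2 (V 3) T = (12 : ℝ) • (A * (A * D)) := by
    rw [hrec' 2 2 3 1 rfl rfl, e23, e21]
    push_cast
    try simp only [Matrix.mul_smul, smul_smul, Matrix.mul_zero, smul_zero, zero_sub, sub_zero]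
    try module
    try simp
  have e33 : iteratedDeriv 3 (V 3) T = 0 := by
    rw [hrec' 2 3 4 2 rfl rfl, e24, e22]
    simp
  have e34 : iteratedDeriv 4 (V 3) T = (-24 : ℝ) • (A * (A * (A * D))) := by
    rw [hrec' 2 4 5 3 rfl rfl, e25, e23]
    push_cast
    try simp only [Matrix.mul_smul, smul_smul, Matrix.mul_zero, smul_zero, zero_sub, sub_zero]
    try module
    try simp
  have e40 : iteratedDeriv 0 (V 4) T = 0 := by
    rw [hrec' 3 0 1 0 rfl rfl, e31, e30]
    simp
  have e41 : iteratedDeriv 1 (V 4) T = (15 : ℝ) • (A * (A * D)) := by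
    rw [hrec' 3 1 2 0 rfl rfl, e32, e30]
    push_cast
    try simp only [Matrix.mul_smul, smul_smul, Matrix.mul_zero, smul_zero, zero_sub, sub_zero]
    try module
    try simp
  have e42 : iteratedDeriv 2 (V 4) T = 0 := by
    rw [hrec' 3 2 3 1 rfl rfl, e33, e31]
    simp
  have e43 : iteratedDeriv 3 (V 4) T = (-60 : ℝ) • (A * (A * (A * D))) := by
    rw [hrec' 3 3 4 2 rfl rfl, e34, e32]
    push_cast
    try simp only [Matrix.mul_smul, smul_smul, Matrix.mul_zero, smul_zero, zero_sub, sub_zero]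
    try module
    try simp
  have e50 : iteratedDeriv 0 (V 5) T = (15 : ℝ) • (A * (A * D)) := by
    rw [hrec' 4 0 1 0 rfl rfl, e41, e40]
    push_cast
    try simp only [Matrix.mul_smul, smul_smul, Matrix.mul_zero, smul_zero, zero_sub, sub_zero]
    try module
    try simp
  have e51 : iteratedDeriv 1 (V 5) T = 0 := by
    rw [hrec' 4 1 2 0 rfl rfl, e42, e40]
    simp
  have e52 : iteratedDeriv 2 (V 5) T = (-90 : ℝ) • (A * (A * (A * D))) := by
    rw [hrec' 4 2 3 1 rfl rfl, e43, e41]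
    push_cast
    try simp only [Matrix.mul_smul, smul_smul, Matrix.mul_zero, smul_zero, zero_sub, sub_zero]
    try module
    try simp
  have e60 : iteratedDeriv 0 (V 6) T = 0 := by
    rw [hrec' 5 0 1 0 rfl rfl, e51, e50]
    simp
  have e61 : iteratedDeriv 1 (V 6) T = (-105 : ℝ) • (A * (A * (A * D))) := by
    rw [hrec' 5 1 2 0 rfl rfl, e52, e50]
    push_cast
    try simp only [Matrix.mul_smul, smul_smul, Matrix.mul_zero, smul_zero, zero_sub, sub_zero]
    try module
    try simp
  have e70 : iteratedDeriv 0 (V 7) T = (-105 : ℝ) • (A * (A * (A * D))) := by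
    rw [hrec' 6 0 1 0 rfl rfl, e61, e60]
    push_cast
    try simp only [Matrix.mul_smul, smul_smul, Matrix.mul_zero, smul_zero, zero_sub, sub_zero]
    try module
    try simp
  have hpow2 : A * (A * D) = A ^ 2 * D := by
    rw [pow_two, Matrix.mul_assoc]
  have hpow3 : A * (A * (A * D)) = A ^ 3 * D := by
    rw [pow_succ, pow_two, Matrix.mul_assoc, Matrix.mul_assoc]
  have hz0 : iteratedDeriv 0 = fun (f : ℝ → Matrix (Fin 6) (Fin m) ℝ) => f := by
    funext f
    exact iteratedDeriv_zero
  refine ⟨?_, ?_, ?_, ?_⟩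
  · rw [← congrFun (congrFun hz0 (V 1)) T]
    exact e10
  · rw [← congrFun (congrFun hz0 (V 3)) T]
    exact e30
  · rw [← congrFun (congrFun hz0 (V 5)) T, ← hpow2]
    exact e50
  · rw [← congrFun (congrFun hz0 (V 7)) T, ← hpow3]
    exact e70
end

section
/- Let T > 0, J₁, J₂ ∈ ℝ with J₁ ≠ 0, let J₀ = diag(J₁, J₂, J₂) ∈ ℝ^{3×3}, and let g : [0,T] → ℝ³ be continuous with g(t) · e₁ = 0 for all t. If r : [0,T] → ℝ³ is differentiable and satisfies J₀ r'(t) = g(t) − r(t) × (J₀ r(t)) for all t ∈ [0,T], then the first component r₁ is constant on [0,T]. -/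
/-- non-controllability obstruction of Section 4.1 of the
paper. If `J₀ = diag(J₁, J₂, J₂)` with `J₁ ≠ 0`, `g` is continuous on `[0,T]`
with vanishing first component, and `r` solves `J₀ r' = g − r × (J₀ r)` on
`[0,T]`, then the first component of `r` is constant on `[0,T]`. -/
theorem stmt_13 (T : ℝ) (hT : 0 < T) (J₁ J₂ : ℝ) (hJ₁ : J₁ ≠ 0)
    (g : ℝ → Fin 3 → ℝ) (hg : ContinuousOn g (Set.Icc 0 T))
    (hg1 : ∀ t ∈ Set.Icc (0:ℝ) T, g t 0 = 0)
    (r r' : ℝ → Fin 3 → ℝ)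
    (hr : ∀ t ∈ Set.Icc (0:ℝ) T, ∀ i : Fin 3,
      HasDerivAt (fun s => r s i) (r' t i) t)
    (heq : ∀ t ∈ Set.Icc (0:ℝ) T,
      (Matrix.diagonal (![J₁, J₂, J₂] : Fin 3 → ℝ)).mulVec (r' t)
        = g t - crossProduct (r t)
            ((Matrix.diagonal (![J₁, J₂, J₂] : Fin 3 → ℝ)).mulVec (r t))) :
    ∀ t ∈ Set.Icc (0:ℝ) T, r t 0 = r 0 0 := by
  have hzero : ∀ t ∈ Set.Icc (0:ℝ) T, r' t 0 = 0 := by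
    intro t ht
    have h0 := congrFun (heq t ht) 0
    simp [Matrix.mulVec, Matrix.diagonal, crossProduct, dotProduct,
      Fin.sum_univ_three, hg1 t ht] at h0
    have h1 : J₁ * r' t 0 = 0 := by nlinarith [h0, sq_nonneg (r t 1), sq_nonneg (r t 2)]
    exact (mul_eq_zero.mp h1).resolve_left hJ₁
  intro t ht
  have key : ∀ x ∈ Set.Icc (0:ℝ) T, ∀ y ∈ Set.Icc (0:ℝ) T,
      ‖r y 0 - r x 0‖ ≤ 0 * ‖y - x‖ := by
    intro x hx y hy
    exact Convex.norm_image_sub_le_of_norm_hasDerivWithin_le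
      (fun s hs => ((hr s hs 0).hasDerivWithinAt))
      (fun s hs => by simp [hzero s hs]) (convex_Icc 0 T) hx hy
  have h := key 0 (Set.left_mem_Icc.mpr hT.le) t ht
  simp only [zero_mul] at h
  have := norm_le_zero_iff.mp h
  linarith [sub_eq_zero.mp this]
end

section
/- Let 0 < c₃ ≤ c₂ ≤ c₁ and define f(s) = √((s + c₁²)(s + c₂²)(s + c₃²)) for s ≥ 0. For each i ∈ {1,2,3}, the integral α_i := c₁ c₂ c₃ ∫₀^∞ ds / ((c_i² + s) f(s)) is finite and satisfies 2c₂c₃/(3c₁²) ≤ α_i ≤ 2c₁c₂/(3c₃²). -/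
/-!
Each of the four factors `s + c²` of the integrand lies between `s + c₃²` and `s + c₁²`, so the
integrand is squeezed between `(s + c₁²)^(-5/2)` and `(s + c₃²)^(-5/2)`, and
`∫₀^∞ (s + c²)^(-5/2) ds = 2/(3c³)`.
-/

open MeasureTheory Set Filter Topology

section ShiftedPower

variable {a p : ℝ}

lemma hasDerivAt_add_rpow_div (hp : p ≠ -1) {x : ℝ} (hx : 0 < x + a) :
    HasDerivAt (fun s => (s + a) ^ (p + 1) / (p + 1)) ((x + a) ^ p) x := by
  have hp' : p + 1 ≠ 0 := by contrapose! hp; linarith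
  have h := ((Real.hasDerivAt_rpow_const (p := p + 1) (Or.inl hx.ne')).comp x
    ((hasDerivAt_id x).add_const a)).div_const (p + 1)
  refine h.congr_deriv ?_
  rw [add_sub_cancel_right, mul_one, mul_div_cancel_left₀ _ hp']

lemma tendsto_add_rpow_div_atTop (hp : p < -1) :
    Tendsto (fun s => (s + a) ^ (p + 1) / (p + 1)) atTop (𝓝 0) := by
  have h := ((tendsto_rpow_neg_atTop (y := -(p + 1)) (by linarith)).comp
    (tendsto_atTop_add_const_right atTop a tendsto_id)).div_const (p + 1)
  simpa using h

lemma integrableOn_Ioi_add_rpow_of_lt (hp : p < -1) (ha : 0 < a) :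
    IntegrableOn (fun s => (s + a) ^ p) (Ioi 0) :=
  integrableOn_Ioi_deriv_of_nonneg'
    (fun x (hx : 0 ≤ x) => hasDerivAt_add_rpow_div hp.ne (by linarith))
    (fun x (hx : 0 < x) => Real.rpow_nonneg (by linarith) p) (tendsto_add_rpow_div_atTop hp)

lemma integral_Ioi_add_rpow_of_lt (hp : p < -1) (ha : 0 < a) :
    ∫ s in Ioi 0, (s + a) ^ p = -a ^ (p + 1) / (p + 1) := by
  rw [integral_Ioi_of_hasDerivAt_of_nonneg'
    (fun x (hx : 0 ≤ x) => hasDerivAt_add_rpow_div hp.ne (by linarith))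
    (fun x (hx : 0 < x) => Real.rpow_nonneg (by linarith) p) (tendsto_add_rpow_div_atTop hp)]
  ring_nf

end ShiftedPower

lemma integral_Ioi_add_sq_rpow_neg_five_halves {c : ℝ} (hc : 0 < c) :
    ∫ s in Ioi 0, (s + c ^ 2) ^ (-(5 / 2) : ℝ) = 2 / (3 * c ^ 3) := by
  rw [integral_Ioi_add_rpow_of_lt (by norm_num) (by positivity), ← Real.rpow_two,
    ← Real.rpow_mul hc.le, show (2 : ℝ) * (-(5 / 2) + 1) = -3 by norm_num, Real.rpow_neg hc.le,
    show (3 : ℝ) = (3 : ℕ) by norm_num, Real.rpow_natCast]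
  field_simp
  norm_num

lemma rpow_neg_five_halves_eq {x : ℝ} (hx : 0 < x) :
    x ^ (-(5 / 2) : ℝ) = 1 / (x * √(x * x * x)) := by
  rw [Real.rpow_neg hx.le, one_div, show x * x * x = x ^ (3 : ℝ) by norm_cast; ring,
    Real.sqrt_eq_rpow, ← Real.rpow_mul hx.le, ← Real.rpow_one_add' hx.le (by norm_num)]
  norm_num

section Sandwich

variable {x y₀ y₁ y₂ y₃ : ℝ}

lemma one_div_mul_sqrt_le_rpow (hx : 0 < x) (h₀ : x ≤ y₀) (h₁ : x ≤ y₁) (h₂ : x ≤ y₂)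
    (h₃ : x ≤ y₃) : 1 / (y₀ * √(y₁ * y₂ * y₃)) ≤ x ^ (-(5 / 2) : ℝ) := by
  have : 0 < y₀ := hx.trans_le h₀
  have : 0 < y₁ := hx.trans_le h₁
  have : 0 < y₂ := hx.trans_le h₂
  rw [rpow_neg_five_halves_eq hx]
  gcongr

lemma rpow_le_one_div_mul_sqrt (hy₀ : 0 < y₀) (hy₁ : 0 < y₁) (hy₂ : 0 < y₂) (hy₃ : 0 < y₃)
    (h₀ : y₀ ≤ x) (h₁ : y₁ ≤ x) (h₂ : y₂ ≤ x) (h₃ : y₃ ≤ x) :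
    x ^ (-(5 / 2) : ℝ) ≤ 1 / (y₀ * √(y₁ * y₂ * y₃)) := by
  have hx : 0 < x := hy₀.trans_le h₀
  rw [rpow_neg_five_halves_eq hx]
  gcongr

end Sandwich

lemma integral_Ioi_bounds_of_add_sq_rpow_bounds {f : ℝ → ℝ} {m M : ℝ} (hm : 0 < m)
    (hM : 0 < M) (hf : Measurable f)
    (hlower : ∀ s ∈ Ioi (0 : ℝ), (s + M ^ 2) ^ (-(5 / 2) : ℝ) ≤ f s)
    (hupper : ∀ s ∈ Ioi (0 : ℝ), f s ≤ (s + m ^ 2) ^ (-(5 / 2) : ℝ)) :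
    IntegrableOn f (Ioi 0) ∧ 2 / (3 * M ^ 3) ≤ ∫ s in Ioi 0, f s ∧
      ∫ s in Ioi 0, f s ≤ 2 / (3 * m ^ 3) := by
  have hintM := integrableOn_Ioi_add_rpow_of_lt (p := -(5 / 2)) (by norm_num) (pow_pos hM 2)
  have hintm := integrableOn_Ioi_add_rpow_of_lt (p := -(5 / 2)) (by norm_num) (pow_pos hm 2)
  have hint : IntegrableOn f (Ioi 0) :=
    integrable_of_le_of_le hf.aestronglyMeasurable
      ((ae_restrict_iff' measurableSet_Ioi).2 (.of_forall hlower))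
      ((ae_restrict_iff' measurableSet_Ioi).2 (.of_forall hupper)) hintM hintm
  refine ⟨hint, ?_, ?_⟩
  · rw [← integral_Ioi_add_sq_rpow_neg_five_halves hM]
    exact setIntegral_mono_on hintM hint measurableSet_Ioi hlower
  · rw [← integral_Ioi_add_sq_rpow_neg_five_halves hm]
    exact setIntegral_mono_on hint hintm measurableSet_Ioi hupper

/-- bound on the coefficients `α_i`, Section 4.2.1 of the
paper. For `0 < c₃ ≤ c₂ ≤ c₁` and
`f(s) = √((s+c₁²)(s+c₂²)(s+c₃²))`, for each `i ∈ {1,2,3}` the integral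
`α_i = c₁c₂c₃ ∫₀^∞ ds/((c_i²+s) f(s))` is finite and satisfies
`2c₂c₃/(3c₁²) ≤ α_i ≤ 2c₁c₂/(3c₃²)`. -/
theorem stmt_14 (c₁ c₂ c₃ : ℝ) (h3 : 0 < c₃) (h32 : c₃ ≤ c₂) (h21 : c₂ ≤ c₁) :
    ∀ ci : ℝ, (ci = c₁ ∨ ci = c₂ ∨ ci = c₃) →
      IntegrableOn
        (fun s => 1 / ((ci ^ 2 + s) *
          Real.sqrt ((s + c₁ ^ 2) * (s + c₂ ^ 2) * (s + c₃ ^ 2))))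
        (Set.Ioi 0) volume ∧
      2 * c₂ * c₃ / (3 * c₁ ^ 2) ≤
        c₁ * c₂ * c₃ * ∫ s in Set.Ioi (0:ℝ),
          1 / ((ci ^ 2 + s) *
            Real.sqrt ((s + c₁ ^ 2) * (s + c₂ ^ 2) * (s + c₃ ^ 2))) ∧
      c₁ * c₂ * c₃ * (∫ s in Set.Ioi (0:ℝ),
          1 / ((ci ^ 2 + s) *
            Real.sqrt ((s + c₁ ^ 2) * (s + c₂ ^ 2) * (s + c₃ ^ 2)))) ≤
        2 * c₁ * c₂ / (3 * c₃ ^ 2) := by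
  intro ci hci
  have h2 : 0 < c₂ := by linarith
  have h1 : 0 < c₁ := by linarith
  have h31 : c₃ ≤ c₁ := h32.trans h21
  obtain ⟨hci3, hci1⟩ : c₃ ^ 2 ≤ ci ^ 2 ∧ ci ^ 2 ≤ c₁ ^ 2 := by
    rcases hci with rfl | rfl | rfl <;> constructor <;> gcongr
  have h32' : c₃ ^ 2 ≤ c₂ ^ 2 := by gcongr
  have h21' : c₂ ^ 2 ≤ c₁ ^ 2 := by gcongr
  set f := fun s : ℝ => 1 / ((ci ^ 2 + s) * √((s + c₁ ^ 2) * (s + c₂ ^ 2) * (s + c₃ ^ 2)))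
  obtain ⟨hint, hlower, hupper⟩ :=
    integral_Ioi_bounds_of_add_sq_rpow_bounds (f := f) h3 h1 (by fun_prop)
      (fun s (hs : 0 < s) => rpow_le_one_div_mul_sqrt (by positivity) (by positivity)
        (by positivity) (by positivity) (by linarith) le_rfl (by linarith) (by linarith))
      (fun s (hs : 0 < s) => one_div_mul_sqrt_le_rpow (by positivity) (by linarith)
        (by linarith) (by linarith) le_rfl)
  refine ⟨hint, ?_, ?_⟩
  · calc 2 * c₂ * c₃ / (3 * c₁ ^ 2) = c₁ * c₂ * c₃ * (2 / (3 * c₁ ^ 3)) := by field_simp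
      _ ≤ _ := by gcongr
  · calc _ ≤ c₁ * c₂ * c₃ * (2 / (3 * c₃ ^ 3)) := by gcongr
      _ = 2 * c₁ * c₂ / (3 * c₃ ^ 2) := by field_simp
end

section
/- Let n, m ≥ 1 and let A, B, X, Y ∈ ℝ^{n×m}. If the n×2m matrices [A | X] and [A | Y] both have rank n, then the 2n×4m block matrix whose block columns are (0; A), (A; B), (0; X), (Y; 0) has rank 2n. -/
open Matrix

theorem Matrix.rank_eq_card_height_iff_surjective_mulVec {K m n : Type*} [Field K]
    [Fintype m] [Fintype n] (M : Matrix m n K) :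
    M.rank = Fintype.card m ↔ Function.Surjective M.mulVec := by
  rw [← M.coe_mulVecLin, ← LinearMap.range_eq_top, Matrix.rank,
    ← Module.finrank_fintype_fun_eq_card K]
  exact ⟨Submodule.eq_top_of_finrank_eq, fun h => h ▸ finrank_top K (m → K)⟩

/-- To hit `(u; v)`, first solve `A a + Y y = u`, then `A a' + X x = v - B a`;
the preimage is `(a', a, x, y)`. -/
theorem Matrix.surjective_mulVec_fromCols_fromRows {K m p q r : Type*} [Ring K]
    [Fintype p] [Fintype q] [Fintype r]
    (A B : Matrix m p K) (X : Matrix m q K) (Y : Matrix m r K)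
    (hAX : Function.Surjective (fromCols A X).mulVec)
    (hAY : Function.Surjective (fromCols A Y).mulVec) :
    Function.Surjective
      (fromCols (fromCols (fromRows 0 A) (fromRows A B))
        (fromCols (fromRows 0 X) (fromRows Y 0))).mulVec := by
  intro uv
  obtain ⟨w, hw⟩ := hAY (uv ∘ Sum.inl)
  obtain ⟨z, hz⟩ := hAX (uv ∘ Sum.inr - B *ᵥ (w ∘ Sum.inl))
  rw [← Sum.elim_comp_inl_inr w, fromCols_mulVec_sumElim] at hw
  rw [← Sum.elim_comp_inl_inr z, fromCols_mulVec_sumElim] at hz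
  refine ⟨Sum.elim (Sum.elim (z ∘ Sum.inl) (w ∘ Sum.inl))
    (Sum.elim (z ∘ Sum.inr) (w ∘ Sum.inr)), ?_⟩
  simp only [fromCols_mulVec_sumElim, fromRows_mulVec, zero_mulVec]
  ext (i | i)
  · simpa using congrFun hw i
  · have h := eq_sub_iff_add_eq.mp (congrFun hz i)
    simp only [Pi.add_apply, Function.comp_apply, Sum.elim_inr, Pi.zero_apply, add_zero] at h ⊢
    rw [← h]
    abel

theorem stmt_18_general (n m : ℕ)
    (A B X Y : Matrix (Fin n) (Fin m) ℝ)
    (hAX : (Matrix.fromCols A X).rank = n)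
    (hAY : (Matrix.fromCols A Y).rank = n) :
    (Matrix.fromCols
        (Matrix.fromCols (Matrix.fromRows 0 A) (Matrix.fromRows A B))
        (Matrix.fromCols (Matrix.fromRows 0 X) (Matrix.fromRows Y 0))).rank
      = 2 * n := by
  have surjective_of_rank {P Q : Matrix (Fin n) (Fin m) ℝ} (h : (fromCols P Q).rank = n) :
      Function.Surjective (fromCols P Q).mulVec :=
    (rank_eq_card_height_iff_surjective_mulVec _).mp (by rwa [Fintype.card_fin])
  have hsurj := surjective_mulVec_fromCols_fromRows A B X Y
    (surjective_of_rank hAX) (surjective_of_rank hAY)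
  rw [(rank_eq_card_height_iff_surjective_mulVec _).mpr hsurj, Fintype.card_sum,
    Fintype.card_fin, two_mul]

/-- linear-algebra core of the rank computations in
Corollary 3.6 / Theorem 3.3 of the paper. If the `n × 2m` matrices `[A | X]`
and `[A | Y]` both have rank `n`, then the `2n × 4m` block matrix with block
columns `(0; A)`, `(A; B)`, `(0; X)`, `(Y; 0)` has rank `2n`. -/
theorem stmt_18 (n m : ℕ) (hn : 1 ≤ n) (hm : 1 ≤ m)
    (A B X Y : Matrix (Fin n) (Fin m) ℝ)
    (hAX : (Matrix.fromCols A X).rank = n)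
    (hAY : (Matrix.fromCols A Y).rank = n) :
    (Matrix.fromCols
        (Matrix.fromCols (Matrix.fromRows 0 A) (Matrix.fromRows A B))
        (Matrix.fromCols (Matrix.fromRows 0 X) (Matrix.fromRows Y 0))).rank
      = 2 * n :=
  stmt_18_general n m A B X Y hAX hAY
end
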